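/- Let A be an n×m complex matrix and v a maximizer of ‖Ax‖_q/‖x‖_1 such that all components of v have equal nonzero absolute value and all nonzero components of Av have the same absolute value. Then v is an eigenvector of A*A. -/

import Mathlib

open scoped BigOperators ENNReal

/-- The Hölder `ℓ_p` norm of a vector in `ℂ^m`, for `p ∈ [1,∞]`. -/
noncomputable def lpNorm {m : ℕ} (p : ℝ≥0∞) (x : Fin m → ℂ) : ℝ :=
  if p = ⊤ then ⨆ i, ‖x i‖ else (∑ i, ‖x i‖ ^ p.toReal) ^ (1 / p.toReal)

/-- The operator norm of an `n × m` complex matrix induced by `ℓ_p` on `ℂ^m`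
and `ℓ_q` on `ℂ^n`. -/
noncomputable def opNorm {n m : ℕ} (p q : ℝ≥0∞) (A : Matrix (Fin n) (Fin m) ℂ) : ℝ :=
  ⨆ x : {x : Fin m → ℂ // x ≠ 0}, lpNorm q (A.mulVec x.1) / lpNorm p x.1

/-- The operator norm of an `n × m` complex matrix induced by general norms
`μ` on `ℂ^m` and `ν` on `ℂ^n`. -/
noncomputable def opNormGen {n m : ℕ} (μ : (Fin m → ℂ) → ℝ) (ν : (Fin n → ℂ) → ℝ)
    (A : Matrix (Fin n) (Fin m) ℂ) : ℝ :=
  ⨆ x : {x : Fin m → ℂ // x ≠ 0}, ν (A.mulVec x.1) / μ x.1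

/-!
Put `y = A v` and `w = Aᴴ y`. The norm `‖A‖_{1,q}` bounds the `q`-norm of every column of `A`,
and since the nonzero entries of `y` have equal modulus, Hölder's inequality against `y` is
sharp: `|w_i| ‖y‖_q ≤ ‖A‖_{1,q} ‖y‖₂²`. Maximality of `v` gives `‖y‖_q = ‖A‖_{1,q} ‖v‖₁`, with
`‖v‖₁ = m r` for the common modulus `r` of the entries of `v`, so `m r |w_i| ≤ ‖y‖₂²`. On the
other hand `∑ conj(v_i) w_i = ‖y‖₂²`, so all the terms `conj(v_i) w_i` equal `‖y‖₂² / m`, which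
forces `w = (‖y‖₂² / ‖v‖₂²) v`.
-/

open Matrix Finset

lemma lpNorm_one_eq_sum {m : ℕ} (x : Fin m → ℂ) : lpNorm 1 x = ∑ i, ‖x i‖ := by
  simp [lpNorm]

lemma lpNorm_nonneg {m : ℕ} (p : ℝ≥0∞) (x : Fin m → ℂ) : 0 ≤ lpNorm p x := by
  unfold lpNorm
  split
  · exact Real.iSup_nonneg fun i => norm_nonneg _
  · positivity

lemma lpNorm_eq_norm_toLp {m : ℕ} {p : ℝ≥0∞} [Fact (1 ≤ p)] (x : Fin m → ℂ) :
    lpNorm p x = ‖WithLp.toLp p x‖ := by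
  unfold lpNorm
  split
  · subst p; rfl
  · rename_i hp
    rw [PiLp.norm_eq_sum (ENNReal.toReal_pos (by have := Fact.out (p := 1 ≤ p); positivity) hp)]

lemma lpNorm_pos {m : ℕ} {p : ℝ≥0∞} (hp : 1 ≤ p) {x : Fin m → ℂ} (hx : x ≠ 0) :
    0 < lpNorm p x := by
  have := Fact.mk hp
  rw [lpNorm_eq_norm_toLp, norm_pos_iff]
  simpa using hx

lemma lpNorm_mulVec_le {n m : ℕ} {q : ℝ≥0∞} (hq : 1 ≤ q) (A : Matrix (Fin n) (Fin m) ℂ)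
    (x : Fin m → ℂ) {C : ℝ} (hC : ∀ i, lpNorm q (A.col i) ≤ C) :
    lpNorm q (A *ᵥ x) ≤ C * lpNorm 1 x := by
  have := Fact.mk hq
  have hsum : A *ᵥ x = ∑ i, x i • A.col i := by
    ext j; simp [mulVec, dotProduct, Finset.sum_apply, mul_comm]
  rw [lpNorm_one_eq_sum, Finset.mul_sum]
  simp only [lpNorm_eq_norm_toLp, hsum, WithLp.toLp_sum, WithLp.toLp_smul] at hC ⊢
  refine (norm_sum_le _ _).trans (Finset.sum_le_sum fun i _ => ?_)
  rw [norm_smul, mul_comm]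
  exact mul_le_mul_of_nonneg_right (hC i) (norm_nonneg _)

lemma bddAbove_lpNorm_mulVec_div_lpNorm_one {n m : ℕ} {q : ℝ≥0∞} (hq : 1 ≤ q)
    (A : Matrix (Fin n) (Fin m) ℂ) :
    BddAbove (Set.range fun x : {x : Fin m → ℂ // x ≠ 0} =>
      lpNorm q (A *ᵥ x.1) / lpNorm 1 x.1) := by
  refine ⟨∑ i, lpNorm q (A.col i), ?_⟩
  rintro _ ⟨x, rfl⟩
  refine div_le_of_le_mul₀ (lpNorm_nonneg _ _) (Finset.sum_nonneg fun i _ => lpNorm_nonneg _ _)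
    (lpNorm_mulVec_le hq A x fun i => ?_)
  exact Finset.single_le_sum (fun i _ => lpNorm_nonneg _ _) (Finset.mem_univ i)

lemma lpNorm_col_le_opNorm {n m : ℕ} {q : ℝ≥0∞} (hq : 1 ≤ q)
    (A : Matrix (Fin n) (Fin m) ℂ) (i : Fin m) : lpNorm q (A.col i) ≤ opNorm 1 q A := by
  have hsingle : lpNorm 1 (Pi.single i 1 : Fin m → ℂ) = 1 := by
    simp [lpNorm_one_eq_sum, Pi.single_apply, apply_ite (‖·‖)]
  have := le_ciSup (bddAbove_lpNorm_mulVec_div_lpNorm_one hq A)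
    ⟨Pi.single i 1, by simp⟩
  simpa [hsingle, mulVec_single_one, opNorm] using this

lemma sum_norm_le_lpNorm_mul_card_rpow {n : ℕ} {q : ℝ≥0∞} (hq : 1 ≤ q) (a : Fin n → ℂ)
    (S : Finset (Fin n)) : ∑ j ∈ S, ‖a j‖ ≤ lpNorm q a * (#S : ℝ) ^ (1 - 1 / q.toReal) := by
  -- For `q = ⊤` we have `q.toReal = 0` and `1 / 0 = 0`, so the exponent is `1` there.
  unfold lpNorm
  split
  · subst q
    calc ∑ j ∈ S, ‖a j‖ ≤ ∑ _j ∈ S, ⨆ i, ‖a i‖ :=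
          Finset.sum_le_sum fun j _ => le_ciSup (f := fun i => ‖a i‖) (Finite.bddAbove_range _) j
      _ = _ := by simp [mul_comm]
  · rename_i hq_top
    set p := q.toReal
    have hp : 1 ≤ p := by simpa using ENNReal.toReal_mono hq_top hq
    have hp0 : 0 < p := by positivity
    calc ∑ j ∈ S, ‖a j‖ = ((∑ j ∈ S, ‖a j‖) ^ p) ^ (1 / p) := by
          rw [← Real.rpow_mul (by positivity), mul_one_div_cancel hp0.ne', Real.rpow_one]
      _ ≤ ((#S : ℝ) ^ (p - 1) * ∑ j, ‖a j‖ ^ p) ^ (1 / p) := by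
          gcongr
          refine (Real.rpow_sum_le_const_mul_sum_rpow_of_nonneg S hp
            fun _ _ => norm_nonneg _).trans ?_
          gcongr
          exact Finset.subset_univ S
      _ = (∑ j, ‖a j‖ ^ p) ^ (1 / p) * (#S : ℝ) ^ (1 - 1 / p) := by
          rw [Real.mul_rpow (by positivity) (by positivity), ← Real.rpow_mul (by positivity),
            mul_comm]
          congr 2
          field_simp

section FlatVector

variable {n : ℕ} {y : Fin n → ℂ} {s : ℝ}

lemma sum_comp_norm_eq_card_mul (hy : ∀ j, y j ≠ 0 → ‖y j‖ = s) {f : ℝ → ℝ} (hf : f 0 = 0) :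
    ∑ j, f ‖y j‖ = (#{j | y j ≠ 0} : ℝ) * f s := by
  rw [← Finset.sum_filter_of_ne (p := fun j => y j ≠ 0) fun j _ hj h => by simp [h, hf] at hj,
    Finset.sum_congr rfl fun j hj => by rw [hy j (Finset.mem_filter.1 hj).2]]
  simp

lemma lpNorm_eq_mul_card_rpow (hy : ∀ j, y j ≠ 0 → ‖y j‖ = s) (hy0 : y ≠ 0) {q : ℝ≥0∞}
    (hq : q ≠ 0) : lpNorm q y = s * (#{j | y j ≠ 0} : ℝ) ^ (1 / q.toReal) := by
  obtain ⟨j₀, hj₀⟩ := Function.ne_iff.1 hy0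
  have hs : 0 ≤ s := hy j₀ hj₀ ▸ norm_nonneg _
  unfold lpNorm
  split
  · subst q
    have : Nonempty (Fin n) := ⟨j₀⟩
    simp only [ENNReal.toReal_top, div_zero, Real.rpow_zero, mul_one]
    refine le_antisymm (ciSup_le fun j => ?_)
      (hy j₀ hj₀ ▸ le_ciSup (f := fun j => ‖y j‖) (Finite.bddAbove_range _) j₀)
    by_cases hj : y j = 0
    · simpa [hj] using hs
    · exact (hy j hj).le
  · rename_i hq_top
    have hp : 0 < q.toReal := ENNReal.toReal_pos hq hq_top
    rw [sum_comp_norm_eq_card_mul hy (f := (· ^ q.toReal)) (Real.zero_rpow hp.ne'),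
      Real.mul_rpow (by positivity) (by positivity), ← Real.rpow_mul hs, mul_one_div_cancel hp.ne',
      Real.rpow_one, mul_comm]

lemma sum_norm_mul_norm_mul_lpNorm_le (hy : ∀ j, y j ≠ 0 → ‖y j‖ = s) {q : ℝ≥0∞} (hq : 1 ≤ q)
    (a : Fin n → ℂ) :
    (∑ j, ‖a j‖ * ‖y j‖) * lpNorm q y ≤ lpNorm q a * ∑ j, ‖y j‖ ^ 2 := by
  rcases eq_or_ne y 0 with rfl | hy0
  · simp
  obtain ⟨j₀, hj₀⟩ := Function.ne_iff.1 hy0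
  have hs : 0 ≤ s := hy j₀ hj₀ ▸ norm_nonneg _
  set k : ℝ := ↑(#{j | y j ≠ 0})
  have hpair : ∑ j, ‖a j‖ * ‖y j‖ = s * ∑ j with y j ≠ 0, ‖a j‖ := by
    rw [Finset.sum_filter, Finset.mul_sum]
    refine Finset.sum_congr rfl fun j _ => ?_
    by_cases hj : y j = 0
    · simp [hj]
    · simp [hj, hy j hj, mul_comm]
  have hk : k ^ (1 - 1 / q.toReal) * k ^ (1 / q.toReal) = k := by
    rw [← Real.rpow_add' (by positivity) (by simp), sub_add_cancel, Real.rpow_one]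
  rw [hpair, lpNorm_eq_mul_card_rpow hy hy0 (zero_lt_one.trans_le hq).ne',
    sum_comp_norm_eq_card_mul hy (f := (· ^ 2)) (by simp)]
  calc s * (∑ j with y j ≠ 0, ‖a j‖) * (s * k ^ (1 / q.toReal))
      ≤ s * (lpNorm q a * k ^ (1 - 1 / q.toReal)) * (s * k ^ (1 / q.toReal)) := by
        gcongr
        exact sum_norm_le_lpNorm_mul_card_rpow hq a _
    _ = lpNorm q a * (k * s ^ 2) := by
        linear_combination lpNorm q a * s ^ 2 * hk

end FlatVector

lemma norm_conjTranspose_mulVec_mul_lpNorm_le {n m : ℕ} {q : ℝ≥0∞} (hq : 1 ≤ q)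
    (A : Matrix (Fin n) (Fin m) ℂ) {y : Fin n → ℂ} {s : ℝ} (hy : ∀ j, y j ≠ 0 → ‖y j‖ = s)
    (i : Fin m) : ‖(Aᴴ *ᵥ y) i‖ * lpNorm q y ≤ opNorm 1 q A * ∑ j, ‖y j‖ ^ 2 := by
  have hwi : ‖(Aᴴ *ᵥ y) i‖ ≤ ∑ j, ‖A.col i j‖ * ‖y j‖ :=
    calc ‖(Aᴴ *ᵥ y) i‖ = ‖∑ j, star (A j i) * y j‖ := rfl
      _ ≤ ∑ j, ‖star (A j i) * y j‖ := norm_sum_le _ _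
      _ = _ := by simp
  calc ‖(Aᴴ *ᵥ y) i‖ * lpNorm q y ≤ (∑ j, ‖A.col i j‖ * ‖y j‖) * lpNorm q y := by
        gcongr
        exact lpNorm_nonneg q y
    _ ≤ lpNorm q (A.col i) * ∑ j, ‖y j‖ ^ 2 := sum_norm_mul_norm_mul_lpNorm_le hy hq _
    _ ≤ opNorm 1 q A * ∑ j, ‖y j‖ ^ 2 := by
        gcongr
        exact lpNorm_col_le_opNorm hq A i

lemma sum_star_mul_conjTranspose_mulVec_mulVec {n m : ℕ} (A : Matrix (Fin n) (Fin m) ℂ)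
    (v : Fin m → ℂ) :
    ∑ i, star (v i) * (Aᴴ *ᵥ (A *ᵥ v)) i = ((∑ j, ‖(A *ᵥ v) j‖ ^ 2 : ℝ) : ℂ) := by
  change star v ⬝ᵥ Aᴴ *ᵥ (A *ᵥ v) = _
  rw [dotProduct_mulVec, ← star_mulVec]
  simp [dotProduct, Complex.conj_mul']

lemma Complex.eq_div_card_of_card_mul_norm_le_of_sum_eq {ι : Type*} [Fintype ι] {z : ι → ℂ}
    {c : ℝ} (hz : ∀ i, Fintype.card ι * ‖z i‖ ≤ c) (hsum : ∑ i, z i = c) (i : ι) :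
    z i = ((c / Fintype.card ι : ℝ) : ℂ) := by
  have hcard : (0 : ℝ) < Fintype.card ι := by exact_mod_cast Fintype.card_pos_iff.2 ⟨i⟩
  have hnorm : ∀ j, ‖z j‖ ≤ c / Fintype.card ι := fun j => by
    rw [le_div_iff₀ hcard, mul_comm]; exact hz j
  have hre : ∀ j, (z j).re = c / Fintype.card ι := by
    have hsum_re : ∑ j, (z j).re = ∑ _j : ι, c / Fintype.card ι := by
      rw [← Complex.re_sum, hsum, Complex.ofReal_re, Finset.sum_const, Finset.card_univ,
        nsmul_eq_mul, mul_div_cancel₀ _ hcard.ne']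
    exact fun j => (Finset.sum_eq_sum_iff_of_le fun j _ =>
      (Complex.re_le_norm _).trans (hnorm j)).1 hsum_re j (Finset.mem_univ j)
  have him : (z i).im = 0 := Complex.abs_re_eq_norm.1 <| le_antisymm
    (Complex.abs_re_le_norm _) (by rw [hre i]; exact (hnorm i).trans (le_abs_self _))
  exact Complex.ext (by simp [hre i]) (by simp [him])

lemma eq_smul_of_card_mul_norm_le_of_sum_star_mul_eq {ι : Type*} [Fintype ι] {v w : ι → ℂ}
    {r c : ℝ} (hv : ∀ i, ‖v i‖ = r) (hr : r ≠ 0) (hw : ∀ i, Fintype.card ι * (r * ‖w i‖) ≤ c)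
    (hsum : ∑ i, star (v i) * w i = c) :
    w = ((c / (Fintype.card ι * r ^ 2) : ℝ) : ℂ) • v := by
  ext i
  have hz := Complex.eq_div_card_of_card_mul_norm_le_of_sum_eq (z := fun i => star (v i) * w i)
    (fun i => by simpa [hv i] using hw i) hsum i
  have hvv : v i * star (v i) = ((r ^ 2 : ℝ) : ℂ) := by
    rw [Complex.star_def, Complex.mul_conj', hv i]; push_cast; ring
  have hr2 : ((r ^ 2 : ℝ) : ℂ) ≠ 0 := by exact_mod_cast pow_ne_zero 2 hr
  apply mul_left_cancel₀ hr2
  calc ((r ^ 2 : ℝ) : ℂ) * w i = v i * (star (v i) * w i) := by rw [← mul_assoc, hvv]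
    _ = _ := by
      rw [hz, Pi.smul_apply, smul_eq_mul]
      have : (r : ℂ) ≠ 0 := by exact_mod_cast hr
      push_cast
      field_simp

theorem stmt_11_general {n m : ℕ} (A : Matrix (Fin n) (Fin m) ℂ) (q : ℝ≥0∞) (hq : 1 ≤ q)
    (v : Fin m → ℂ) (hv : v ≠ 0)
    (hmax : lpNorm q (A.mulVec v) / lpNorm 1 v = opNorm 1 q A)
    (h1 : ∀ i j : Fin m, ‖v i‖ = ‖v j‖)
    (h2 : ∀ i j : Fin n, A.mulVec v i ≠ 0 → A.mulVec v j ≠ 0 →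
      ‖A.mulVec v i‖ = ‖A.mulVec v j‖) :
    ∃ t : ℂ, (A.conjTranspose * A).mulVec v = t • v := by
  rw [← mulVec_mulVec]
  set y := A *ᵥ v
  rcases eq_or_ne y 0 with hy0 | hy0
  · exact ⟨0, by rw [hy0, mulVec_zero, zero_smul]⟩
  obtain ⟨i₀, hi₀⟩ := Function.ne_iff.1 hv
  obtain ⟨j₀, hj₀⟩ := Function.ne_iff.1 hy0
  have hr : 0 < ‖v i₀‖ := norm_pos_iff.2 hi₀
  have hm : (0 : ℝ) < m := Nat.cast_pos.2 i₀.pos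
  have hyq : lpNorm q y = opNorm 1 q A * (m * ‖v i₀‖) := by
    have hv1 : lpNorm 1 v = m * ‖v i₀‖ := by simp [lpNorm_one_eq_sum, fun i => h1 i i₀]
    rw [← hv1, ← hmax, div_mul_cancel₀ _ (by rw [hv1]; positivity)]
  have hopNorm_pos : 0 < opNorm 1 q A :=
    pos_of_mul_pos_left (hyq ▸ lpNorm_pos hq hy0) (by positivity)
  have hw : ∀ i, m * (‖v i₀‖ * ‖(Aᴴ *ᵥ y) i‖) ≤ ∑ j, ‖y j‖ ^ 2 := fun i => by
    refine le_of_mul_le_mul_left ?_ hopNorm_pos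
    calc _ = ‖(Aᴴ *ᵥ y) i‖ * lpNorm q y := by rw [hyq]; ring
      _ ≤ _ := norm_conjTranspose_mulVec_mul_lpNorm_le hq A (fun j hj => h2 j j₀ hj hj₀) i
  exact ⟨_, eq_smul_of_card_mul_norm_le_of_sum_star_mul_eq (fun i => h1 i i₀) hr.ne'
    (by simpa using hw) (sum_star_mul_conjTranspose_mulVec_mulVec A v)⟩

/-- Lemma 3.1 (case `p = 1`, `v ∈ K₁`): a maximizer `v` of `‖Ax‖_q/‖x‖_1`
all of whose components have equal nonzero absolute value, and such that
all nonzero components of `Av` have the same absolute value, is an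
eigenvector of `A*A`. -/
theorem stmt_11 {n m : ℕ} (A : Matrix (Fin n) (Fin m) ℂ) (q : ℝ≥0∞) (hq : 1 ≤ q)
    (v : Fin m → ℂ) (hv : v ≠ 0)
    (hmax : lpNorm q (A.mulVec v) / lpNorm 1 v = opNorm 1 q A)
    (h0 : ∀ i : Fin m, v i ≠ 0)
    (h1 : ∀ i j : Fin m, ‖v i‖ = ‖v j‖)
    (h2 : ∀ i j : Fin n, A.mulVec v i ≠ 0 → A.mulVec v j ≠ 0 →
      ‖A.mulVec v i‖ = ‖A.mulVec v j‖) :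
    ∃ t : ℂ, (A.conjTranspose * A).mulVec v = t • v :=
  stmt_11_general A q hq v hv hmax h1 h2
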